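/- arXiv:nlin/0606039 — 3 statements merged into one kernel-verified Lean document; each statement's English description precedes it below -/
import Mathlib

section
/- Let q be a real number with q ≠ 0 and q ≠ 1, let n ≥ 1, and let φ_1, …, φ_n : ℝ → ℝ. Define recursively φ_j^{(0)} = φ_j and, for 1 ≤ i < j ≤ n, φ_j^{(i)} = D_{φ_i^{(i−1)}} φ_j^{(i−1)}. Assume that for each i = 1, …, n the q-Wronskian W_i^q(φ_1, …, φ_i)(x) ≠ 0 for all x ≠ 0. Then for every x ≠ 0 the product of the successive Darboux-transformed generating functions telescopes to the q-Wronskian: φ_1^{(0)}(x) · φ_2^{(1)}(x) · φ_3^{(2)}(x) ⋯ φ_n^{(n−1)}(x) = W_n^q(φ_1, …, φ_n)(x). (This expresses that the τ function produced by n steps of elementary gauge transformations from τ = 1 is the q-Wronskian W_n^q(φ_1, …, φ_n).) -/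
/-- The `q`-derivative: `(∂_q f)(x) = (f(qx) − f(x))/(x(q−1))` (zero at `x = 0`). -/
noncomputable def qDeriv (q : ℝ) (f : ℝ → ℝ) : ℝ → ℝ :=
  fun x => (f (q * x) - f x) / (x * (q - 1))

/-- The q-Wronskian `W_n^q(f_1,…,f_n)(x) = det((∂_q^{i−1} f_j)(x))`. -/
noncomputable def qWronskian (q : ℝ) (n : ℕ) (f : Fin n → ℝ → ℝ) (x : ℝ) : ℝ :=
  Matrix.det (Matrix.of fun i j : Fin n => (qDeriv q)^[(i : ℕ)] (f j) x)

/-- The Darboux transform generated by `h`: `(D_h g)(x) = h(qx)·(∂_q(g/h))(x)`. -/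
noncomputable def qDarboux (q : ℝ) (h g : ℝ → ℝ) : ℝ → ℝ :=
  fun x => h (q * x) * qDeriv q (fun y => g y / h y) x

/-- The recursively Darboux-transformed family: `Φ_j^{(0)} = Φ j` and
`Φ_j^{(i+1)} = D_{Φ_{i+1}^{(i)}} Φ_j^{(i)}` (generating functions are `Φ 1, Φ 2, …`). -/
noncomputable def qDarbouxFam (q : ℝ) (Φ : ℕ → ℝ → ℝ) : ℕ → ℕ → (ℝ → ℝ)
  | 0, j => Φ j
  | i + 1, j => qDarboux q (qDarbouxFam q Φ i (i + 1)) (qDarbouxFam q Φ i j)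

/-! Factoring out the first function gives
`W_{n+1}(f_0, …, f_n) = f_0 · W_n(D_{f_0} f_1, …, D_{f_0} f_n)`. Indeed, write `f_c = f_0 g_c`
(off `0`, which is all the Wronskian at `x ≠ 0` sees when `q ≠ 0`). By the q-Leibniz rule the
q-Wronskian matrix of `(f_0 g_c)` is a lower triangular matrix with diagonal `f_0(q^r x)` times
that of `(g_c)`; the column of `g_0 = 1` reduces `W(1, g_1, …)` to `W(∂_q g_1, …)`; and
`D_{f_0} f_c = θ f_0 · ∂_q g_c` returns the factors `f_0(q^r x)`, `r ≥ 1`. Since the Darboux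
family of `φ` from level `1` on is the one generated by `D_{φ_1} φ_2, D_{φ_1} φ_3, …`,
induction on `n` telescopes the product. -/

lemma qDeriv_const (q a : ℝ) : qDeriv q (fun _ => a) = 0 := by
  funext x
  simp [qDeriv]

lemma qDeriv_zero (q : ℝ) : qDeriv q 0 = 0 :=
  qDeriv_const q 0

lemma iterate_qDeriv_zero (q : ℝ) (r : ℕ) : (qDeriv q)^[r] 0 = 0 :=
  Function.iterate_fixed (qDeriv_zero q) r

lemma qDeriv_sum {ι : Type*} (q : ℝ) (s : Finset ι) (f : ι → ℝ → ℝ) :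
    qDeriv q (∑ i ∈ s, f i) = ∑ i ∈ s, qDeriv q (f i) := by
  funext x
  simp only [qDeriv, Finset.sum_apply, ← Finset.sum_sub_distrib, Finset.sum_div]

lemma qDeriv_mul (q : ℝ) (f g : ℝ → ℝ) :
    qDeriv q (f * g) = (fun x => f (q * x)) * qDeriv q g + qDeriv q f * g := by
  funext x
  simp only [qDeriv, Pi.mul_apply, Pi.add_apply]
  ring

lemma eqOn_qDeriv {q : ℝ} (hq : q ≠ 0) {f g : ℝ → ℝ} (h : Set.EqOn f g {0}ᶜ) :
    Set.EqOn (qDeriv q f) (qDeriv q g) {0}ᶜ := by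
  intro x hx
  simp only [qDeriv, h hx, h (mul_ne_zero hq hx : q * x ∈ ({0}ᶜ : Set ℝ))]

lemma eqOn_iterate_qDeriv {q : ℝ} (hq : q ≠ 0) {f g : ℝ → ℝ} (h : Set.EqOn f g {0}ᶜ)
    (r : ℕ) :
    Set.EqOn ((qDeriv q)^[r] f) ((qDeriv q)^[r] g) {0}ᶜ := by
  induction r with
  | zero => exact h
  | succ r ih =>
    simp only [Function.iterate_succ_apply']
    exact eqOn_qDeriv hq ih

noncomputable def qLeibnizCoeff (q : ℝ) (h : ℝ → ℝ) : ℕ → ℕ → ℝ → ℝ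
  | 0, 0 => h
  | 0, _ + 1 => 0
  | r + 1, 0 => qDeriv q (qLeibnizCoeff q h r 0)
  | r + 1, s + 1 =>
    qDeriv q (qLeibnizCoeff q h r (s + 1)) + fun x => qLeibnizCoeff q h r s (q * x)

lemma qLeibnizCoeff_eq_zero_of_lt (q : ℝ) (h : ℝ → ℝ) {r s : ℕ} (hrs : r < s) :
    qLeibnizCoeff q h r s = 0 := by
  induction r generalizing s with
  | zero =>
    obtain ⟨s, rfl⟩ := Nat.exists_eq_add_one_of_ne_zero hrs.ne'
    rfl
  | succ r ih =>
    obtain ⟨s, rfl⟩ := Nat.exists_eq_add_one_of_ne_zero (by omega : s ≠ 0)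
    rw [qLeibnizCoeff, ih (by omega), ih (by omega), qDeriv_zero]
    exact zero_add _

lemma qLeibnizCoeff_self (q : ℝ) (h : ℝ → ℝ) (r : ℕ) :
    qLeibnizCoeff q h r r = fun x => h (q ^ r * x) := by
  induction r with
  | zero => simp [qLeibnizCoeff]
  | succ r ih =>
    rw [qLeibnizCoeff, qLeibnizCoeff_eq_zero_of_lt q h (Nat.lt_succ_self r), ih,
      qDeriv_zero]
    funext x
    simp only [Pi.add_apply, Pi.zero_apply, zero_add, pow_succ, mul_assoc]

lemma iterate_qDeriv_mul (q : ℝ) (h g : ℝ → ℝ) (r : ℕ) :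
    (qDeriv q)^[r] (h * g) =
      ∑ s ∈ Finset.range (r + 1), qLeibnizCoeff q h r s * (qDeriv q)^[s] g := by
  induction r with
  | zero => simp [qLeibnizCoeff]
  | succ r ih =>
    rw [Function.iterate_succ_apply', ih, qDeriv_sum]
    simp only [qDeriv_mul, ← Function.iterate_succ_apply' (qDeriv q)]
    have hextend :
        ∑ s ∈ Finset.range (r + 1), qDeriv q (qLeibnizCoeff q h r s) * (qDeriv q)^[s] g =
          ∑ s ∈ Finset.range (r + 2), qDeriv q (qLeibnizCoeff q h r s) * (qDeriv q)^[s] g := by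
      rw [Finset.sum_range_succ _ (r + 1), qLeibnizCoeff_eq_zero_of_lt q h (Nat.lt_succ_self r),
        qDeriv_zero, zero_mul, add_zero]
    rw [Finset.sum_add_distrib, hextend, Finset.sum_range_succ' _ (r + 1),
      Finset.sum_range_succ' _ (r + 1)]
    simp only [qLeibnizCoeff, add_mul, Finset.sum_add_distrib]
    abel

section QWronskian

variable {n : ℕ}

lemma qWronskian_zero (q : ℝ) (f : Fin 0 → ℝ → ℝ) (x : ℝ) : qWronskian q 0 f x = 1 :=
  Matrix.det_fin_zero

lemma qWronskian_one (q : ℝ) (f : Fin 1 → ℝ → ℝ) (x : ℝ) : qWronskian q 1 f x = f 0 x := by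
  simp [qWronskian]

lemma qWronskian_congr {q : ℝ} (hq : q ≠ 0) {f g : Fin n → ℝ → ℝ}
    (hfg : ∀ c, Set.EqOn (f c) (g c) {0}ᶜ) {x : ℝ} (hx : x ≠ 0) :
    qWronskian q n f x = qWronskian q n g x := by
  simp only [qWronskian]
  congr 1
  ext r c
  exact eqOn_iterate_qDeriv hq (hfg c) r hx

lemma qWronskian_mul (q : ℝ) (h : ℝ → ℝ) (g : Fin n → ℝ → ℝ) (x : ℝ) :
    qWronskian q n (fun c => h * g c) x =
      (∏ r : Fin n, h (q ^ (r : ℕ) * x)) * qWronskian q n g x := by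
  set L : Matrix (Fin n) (Fin n) ℝ := Matrix.of fun r s => qLeibnizCoeff q h r s x
  have hL : L.IsLowerTriangular := fun r s hrs => by
    simp [L, qLeibnizCoeff_eq_zero_of_lt q h (show (r : ℕ) < s from hrs)]
  have hfactor : (Matrix.of fun r c : Fin n => (qDeriv q)^[(r : ℕ)] (h * g c) x) =
      L * Matrix.of fun r c : Fin n => (qDeriv q)^[(r : ℕ)] (g c) x := by
    ext r c
    simp only [Matrix.mul_apply, Matrix.of_apply, L]
    rw [iterate_qDeriv_mul, Finset.sum_apply]
    simp only [Pi.mul_apply]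
    rw [Fin.sum_univ_eq_sum_range (fun s => qLeibnizCoeff q h r s x * (qDeriv q)^[s] (g c) x)]
    refine Finset.sum_subset (Finset.range_subset_range.2 r.isLt) fun s _ hs => ?_
    simp [qLeibnizCoeff_eq_zero_of_lt q h (show (r : ℕ) < s by simpa using hs)]
  rw [qWronskian, hfactor, Matrix.det_mul, Matrix.det_of_isLowerTriangular L hL, qWronskian]
  simp [L, qLeibnizCoeff_self]

lemma qWronskian_cons_one (q : ℝ) (g : Fin n → ℝ → ℝ) (x : ℝ) :
    qWronskian q (n + 1) (Fin.cons 1 g) x = qWronskian q n (fun c => qDeriv q (g c)) x := by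
  have hconst : ∀ r : ℕ, (qDeriv q)^[r + 1] 1 = 0 := fun r => by
    rw [Function.iterate_succ_apply, show (1 : ℝ → ℝ) = fun _ => 1 from rfl, qDeriv_const,
      iterate_qDeriv_zero]
  rw [qWronskian, qWronskian, Matrix.det_succ_column_zero, Fin.sum_univ_succ]
  simp only [Matrix.of_apply, Fin.val_succ, Fin.cons_zero, hconst, Pi.zero_apply, mul_zero,
    zero_mul, Finset.sum_const_zero, add_zero, Fin.val_zero, pow_zero, Function.iterate_zero, id,
    Pi.one_apply, one_mul, Fin.succAbove_zero]
  exact congrArg Matrix.det (Matrix.ext fun r c => by simp [Function.iterate_succ_apply])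

lemma qWronskian_succ_eq_mul_qWronskian_qDarboux {q : ℝ} (hq : q ≠ 0)
    (f : Fin (n + 1) → ℝ → ℝ) (hf : ∀ y, y ≠ 0 → f 0 y ≠ 0) {x : ℝ} (hx : x ≠ 0) :
    qWronskian q (n + 1) f x =
      f 0 x * qWronskian q n (fun c => qDarboux q (f 0) (f c.succ)) x := by
  set g : Fin n → ℝ → ℝ := fun c y => f c.succ y / f 0 y
  have hfactor : ∀ c, Set.EqOn (f c) (f 0 * (Fin.cons 1 g : Fin (n + 1) → ℝ → ℝ) c) {0}ᶜ := by
    intro c y hy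
    induction c using Fin.cases with
    | zero => simp
    | succ c => simp [g, mul_div_cancel₀ _ (hf y hy)]
  have hDarboux : (fun c => qDarboux q (f 0) (f c.succ)) =
      fun c => (fun y => f 0 (q * y)) * qDeriv q (g c) := rfl
  rw [qWronskian_congr hq hfactor hx, qWronskian_mul, qWronskian_cons_one, hDarboux,
    qWronskian_mul, Fin.prod_univ_succ]
  simp only [Fin.val_zero, Fin.val_succ, pow_zero, one_mul, pow_succ', mul_assoc]

end QWronskian

lemma qDarbouxFam_succ_succ (q : ℝ) (Φ : ℕ → ℝ → ℝ) (i j : ℕ) :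
    qDarbouxFam q Φ (i + 1) (j + 1) =
      qDarbouxFam q (fun j => qDarboux q (Φ 1) (Φ (j + 1))) i j := by
  induction i generalizing j with
  | zero => rfl
  | succ i ih => rw [qDarbouxFam, ih, ih, qDarbouxFam]

theorem qDarboux_telescoping_product_general (q : ℝ) (hq0 : q ≠ 0)
    (n : ℕ) (Φ : ℕ → ℝ → ℝ)
    (hW : ∀ i : ℕ, 1 ≤ i → i ≤ n → ∀ x : ℝ, x ≠ 0 →
      qWronskian q i (fun j : Fin i => Φ ((j : ℕ) + 1)) x ≠ 0) :
    ∀ x : ℝ, x ≠ 0 →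
      (∏ i ∈ Finset.range n, qDarbouxFam q Φ i (i + 1) x) =
        qWronskian q n (fun j : Fin n => Φ ((j : ℕ) + 1)) x := by
  induction n generalizing Φ with
  | zero => exact fun x _ => (qWronskian_zero q _ x).symm
  | succ n ih =>
    intro x hx
    have hΦ₁ : ∀ y, y ≠ 0 → Φ 1 y ≠ 0 := fun y hy => by
      simpa [qWronskian_one] using hW 1 le_rfl (by omega) y hy
    set Ψ : ℕ → ℝ → ℝ := fun j => qDarboux q (Φ 1) (Φ (j + 1))
    have hstep : ∀ i y, y ≠ 0 →
        qWronskian q (i + 1) (fun j : Fin (i + 1) => Φ ((j : ℕ) + 1)) y =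
          Φ 1 y * qWronskian q i (fun j : Fin i => Ψ ((j : ℕ) + 1)) y :=
      fun i y hy => qWronskian_succ_eq_mul_qWronskian_qDarboux hq0 _ hΦ₁ hy
    have hWΨ : ∀ i, 1 ≤ i → i ≤ n → ∀ y, y ≠ 0 →
        qWronskian q i (fun j : Fin i => Ψ ((j : ℕ) + 1)) y ≠ 0 := fun i _ hin y hy => by
      have := hW (i + 1) (by omega) (by omega) y hy
      rw [hstep i y hy] at this
      exact right_ne_zero_of_mul this
    rw [Finset.prod_range_succ', hstep n x hx, mul_comm]
    simp only [qDarbouxFam_succ_succ]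
    exact congrArg (Φ 1 x * ·) (ih Ψ hWΨ x hx)

/-- The product of the successive Darboux-transformed generating functions telescopes to
the q-Wronskian: `φ_1^{(0)} φ_2^{(1)} ⋯ φ_n^{(n−1)} = W_n^q(φ_1,…,φ_n)`
(the τ function produced by `n` elementary gauge transformations from `τ = 1`). -/
theorem qDarboux_telescoping_product (q : ℝ) (hq0 : q ≠ 0) (hq1 : q ≠ 1)
    (n : ℕ) (hn : 1 ≤ n) (Φ : ℕ → ℝ → ℝ)
    (hW : ∀ i : ℕ, 1 ≤ i → i ≤ n → ∀ x : ℝ, x ≠ 0 →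
      qWronskian q i (fun j : Fin i => Φ ((j : ℕ) + 1)) x ≠ 0) :
    ∀ x : ℝ, x ≠ 0 →
      (∏ i ∈ Finset.range n, qDarbouxFam q Φ i (i + 1) x) =
        qWronskian q n (fun j : Fin n => Φ ((j : ℕ) + 1)) x :=
  qDarboux_telescoping_product_general q hq0 n Φ hW
end

section
/- Let q be a real number with q ≠ 0 and q ≠ 1, let n ≥ 1, let λ_1, …, λ_n be real numbers, and let f_1, …, f_n : ℝ → ℝ satisfy the q-eigenfunction equations (∂_q f_j)(x) = λ_j · f_j(x) for all x ≠ 0 and all j. Then for every x ≠ 0 the q-Wronskian factors as a Vandermonde determinant times the product of the functions: W_n^q(f_1, …, f_n)(x) = (∏_{1 ≤ i < j ≤ n} (λ_j − λ_i)) · f_1(x) f_2(x) ⋯ f_n(x). -/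
/-! Each column `j` of the q-Wronskian matrix of eigenfunctions is `f_j(x)` times the column
`(1, λ_j, λ_j², …)`, because `∂_q^k f_j = λ_j^k f_j` away from `0` (by
induction on `k`: `∂_q g (x)` only sees `g` at `x` and `qx`, both nonzero). Pulling the factors `f_j(x)`
out of the columns leaves the transposed Vandermonde matrix of the `λ_j`. -/

lemma qDeriv_apply_congr {q x : ℝ} {f g : ℝ → ℝ} (hx : f x = g x) (hqx : f (q * x) = g (q * x)) :
    qDeriv q f x = qDeriv q g x := by
  simp only [qDeriv, hx, hqx]

lemma qDeriv_const_mul (q c : ℝ) (f : ℝ → ℝ) :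
    qDeriv q (fun y => c * f y) = fun y => c * qDeriv q f y := by
  funext y
  simp only [qDeriv]
  ring

lemma qDeriv_iterate_apply_of_eigen {q c : ℝ} (hq0 : q ≠ 0) {f : ℝ → ℝ}
    (hf : ∀ x : ℝ, x ≠ 0 → qDeriv q f x = c * f x) (k : ℕ) :
    ∀ x : ℝ, x ≠ 0 → (qDeriv q)^[k] f x = c ^ k * f x := by
  induction k with
  | zero => simp
  | succ k ih =>
    intro x hx
    calc (qDeriv q)^[k + 1] f x
        = qDeriv q (fun y => c ^ k * f y) x := by
          rw [Function.iterate_succ_apply']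
          exact qDeriv_apply_congr (ih x hx) (ih _ (mul_ne_zero hq0 hx))
      _ = c ^ k * (c * f x) := by rw [qDeriv_const_mul, ← hf x hx]
      _ = c ^ (k + 1) * f x := by ring

lemma Matrix.det_of_pow_mul {R : Type*} [CommRing R] {n : ℕ} (v c : Fin n → R) :
    (Matrix.of fun i j : Fin n => v j ^ (i : ℕ) * c j).det =
      (∏ i : Fin n, ∏ j ∈ Finset.Ioi i, (v j - v i)) * ∏ j : Fin n, c j := by
  have hcol : (Matrix.of fun i j : Fin n => v j ^ (i : ℕ) * c j) =
      Matrix.of fun i j => c j * (Matrix.vandermonde v).transpose i j := by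
    ext i j
    simp [Matrix.vandermonde, mul_comm]
  rw [hcol, Matrix.det_mul_row, Matrix.det_transpose, Matrix.det_vandermonde, mul_comm]

theorem qWronskian_eigenfunctions_general (q : ℝ) (hq0 : q ≠ 0)
    (n : ℕ) (lam : Fin n → ℝ) (f : Fin n → ℝ → ℝ)
    (hf : ∀ j : Fin n, ∀ x : ℝ, x ≠ 0 → qDeriv q (f j) x = lam j * f j x) :
    ∀ x : ℝ, x ≠ 0 →
      qWronskian q n f x =
        (∏ i : Fin n, ∏ j ∈ Finset.Ioi i, (lam j - lam i)) * ∏ j : Fin n, f j x := by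
  intro x hx
  have hentries : (Matrix.of fun i j : Fin n => (qDeriv q)^[(i : ℕ)] (f j) x) =
      Matrix.of fun i j : Fin n => lam j ^ (i : ℕ) * f j x := by
    ext i j
    exact qDeriv_iterate_apply_of_eigen hq0 (hf j) i x hx
  rw [qWronskian, hentries, Matrix.det_of_pow_mul]

/-- For q-eigenfunctions `∂_q f_j = λ_j f_j`, the q-Wronskian factors as a Vandermonde
determinant times the product of the functions:
`W_n^q(f_1,…,f_n)(x) = ∏_{i<j} (λ_j − λ_i) · f_1(x) ⋯ f_n(x)`. -/
theorem qWronskian_eigenfunctions (q : ℝ) (hq0 : q ≠ 0) (hq1 : q ≠ 1)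
    (n : ℕ) (hn : 1 ≤ n) (lam : Fin n → ℝ) (f : Fin n → ℝ → ℝ)
    (hf : ∀ j : Fin n, ∀ x : ℝ, x ≠ 0 → qDeriv q (f j) x = lam j * f j x) :
    ∀ x : ℝ, x ≠ 0 →
      qWronskian q n f x =
        (∏ i : Fin n, ∏ j ∈ Finset.Ioi i, (lam j - lam i)) * ∏ j : Fin n, f j x :=
  qWronskian_eigenfunctions_general q hq0 n lam f hf
end

section
/- Let q be a real number with q ≠ 0 and q ≠ 1, let N ≥ 1, M ≥ 0 and l ≥ 1, and let φ_1, …, φ_N : ℝ → ℝ with W_N^q(φ_1, …, φ_N)(x) ≠ 0 for all x ≠ 0. Fix indices 1 ≤ i_1 < i_2 < ⋯ < i_{M+1} ≤ N. Then the following are equivalent: (a) W_{N+M+1}^q(φ_1, …, φ_N, ∂_q^l φ_{i_1}, …, ∂_q^l φ_{i_{M+1}})(x) = 0 for all x ≠ 0; (b) W_{M+1}^q(ρ_{i_1}, …, ρ_{i_{M+1}})(x) = 0 for all x ≠ 0, where ρ_i = W_{N+1}^q(φ_1, …, φ_N, ∂_q^l φ_i)/W_N^q(φ_1, …, φ_N).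 -/
open Matrix Finset

theorem Fin.comp_append {α β : Sort*} {m n : ℕ} (g : α → β) (a : Fin m → α) (b : Fin n → α) :
    g ∘ Fin.append a b = Fin.append (g ∘ a) (g ∘ b) := by
  ext i
  induction i using Fin.addCases <;> simp

section Casoratian

variable {R : Type*} [CommRing R]

noncomputable def casoratian {n : ℕ} (f : Fin n → ℕ → R) (i : ℕ) : R :=
  (of fun r j : Fin n => f j (i + r)).det

theorem casoratian_snoc_sub_sum {N : ℕ} (φ : Fin N → ℕ → R) (g : ℕ → R) (c : Fin N → R)
    (i : ℕ) :
    casoratian (Fin.snoc φ fun r => g r - ∑ j, c j * φ j r) i =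
      casoratian (Fin.snoc φ g) i := by
  set A := of fun r j : Fin (N + 1) => (Fin.snoc φ g : Fin (N + 1) → ℕ → R) j (i + r)
  have h := det_updateCol_sum A (Fin.last N) (Fin.snoc (-c) 1)
  rw [Fin.snoc_last, one_smul] at h
  rw [casoratian, casoratian, ← h]
  congr 1
  ext r j
  refine Fin.lastCases ?_ (fun j => ?_) j
  · simp [A, Fin.sum_univ_castSucc, sub_eq_neg_add, mul_comm]
  · simp [A]

theorem casoratian_snoc_eq_sum {N : ℕ} (φ : Fin N → ℕ → R) (g : ℕ → R) (i : ℕ) :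
    casoratian (Fin.snoc φ g) i = ∑ r : Fin (N + 1), (-1) ^ (r + N : ℕ) *
      (of fun a b : Fin N => φ b (i + r.succAbove a)).det * g (i + r) := by
  rw [casoratian, det_succ_column _ (Fin.last N)]
  refine sum_congr rfl fun r _ => ?_
  simp only [of_apply, Fin.snoc_last, Fin.val_last, Fin.succAbove_last]
  rw [mul_right_comm]
  congr 3
  ext a b
  simp

theorem det_casoratian_snoc_of_eq_zero {N m : ℕ} (φ : Fin N → ℕ → R) (ψ : Fin m → ℕ → R)
    (hψ : ∀ k, ∀ r < N, ψ k r = 0) :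
    (of fun i k : Fin m => casoratian (Fin.snoc φ (ψ k)) i).det =
      (∏ i : Fin m, casoratian φ i) * (of fun t k : Fin m => ψ k (N + t)).det := by
  -- `E i t` is the cofactor of the entry in row `N + t` of the window starting at row `i`.
  set E : Matrix (Fin m) (Fin m) R := of fun i t => ∑ r : Fin (N + 1),
    (-1) ^ (r + N : ℕ) * (of fun a b : Fin N => φ b (i + r.succAbove a)).det *
      if (i + r : ℕ) = N + t then 1 else 0
  have hψ_eq : ∀ k (i : Fin m) (r : Fin (N + 1)),
      ψ k (i + r) = ∑ t : Fin m, (if (i + r : ℕ) = N + t then 1 else 0) * ψ k (N + t) := by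
    intro k i r
    by_cases hr : N ≤ i + r
    · rw [sum_eq_single ⟨i + r - N, by omega⟩ (fun t _ ht => by
        rw [if_neg fun h => ht (Fin.ext (by simp; omega)), zero_mul])
        (by simp), if_pos (by simp; omega)]
      simp only [one_mul]
      congr 1
      omega
    · rw [hψ k _ (by omega)]
      exact (sum_eq_zero fun t _ => by rw [if_neg (by omega), zero_mul]).symm
  have hfactor : (of fun i k : Fin m => casoratian (Fin.snoc φ (ψ k)) i) =
      E * of fun t k : Fin m => ψ k (N + t) := by
    ext i k
    simp only [of_apply, casoratian_snoc_eq_sum, mul_apply, E, sum_mul, mul_assoc]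
    rw [sum_comm]
    exact sum_congr rfl fun r _ => by rw [← mul_sum, ← mul_sum, hψ_eq]
  have hlower : E.IsLowerTriangular := by
    intro i t hit
    have : (i : ℕ) < t := hit
    simp only [E, of_apply]
    exact sum_eq_zero fun r _ => by rw [if_neg (by omega), mul_zero]
  have hdiag : ∀ i : Fin m, E i i = casoratian φ i := by
    intro i
    rw [show E i i = _ from of_apply .., sum_eq_single (Fin.last N) (fun r _ hr => by
      rw [if_neg fun h => hr (Fin.ext (by simp; omega)), mul_zero]) (by simp),
      if_pos (by simp [add_comm]), mul_one]
    simp [casoratian, ← two_mul]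
  rw [hfactor, det_mul, det_of_isLowerTriangular E hlower]
  simp only [hdiag]

end Casoratian

section Sylvester

variable {K : Type*} [Field K] {N m : ℕ}

theorem exists_casoratian_append_eq_mul_det (φ : Fin N → ℕ → K) (ψ : Fin m → ℕ → K)
    (hφ : casoratian φ 0 ≠ 0) :
    ∃ c : Fin m → Fin N → K, (∀ k, ∀ r < N, ψ k r - ∑ j, c k j * φ j r = 0) ∧
      casoratian (Fin.append φ ψ) 0 = casoratian φ 0 *
        (of fun t k : Fin m => ψ k (N + t) - ∑ j, c k j * φ j (N + t)).det := by
  set P : Matrix (Fin N) (Fin N) K := of fun r j => φ j r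
  set B : Matrix (Fin N) (Fin m) K := of fun r k => ψ k r
  have hP : casoratian φ 0 = P.det := by simp [casoratian, P]
  have : Invertible P := invertibleOfIsUnitDet P (isUnit_iff_ne_zero.mpr (hP ▸ hφ))
  refine ⟨fun k j => (P⁻¹ * B) j k, fun k r hr => ?_, ?_⟩
  · have h : (P * (P⁻¹ * B)) ⟨r, hr⟩ k = B ⟨r, hr⟩ k := by
      rw [mul_nonsing_inv_cancel_left P B (isUnit_det_of_invertible P)]
    rw [mul_apply] at h
    rw [sub_eq_zero]
    exact h.symm.trans (sum_congr rfl fun j _ => mul_comm _ _)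
  · have hblocks : (of fun r c : Fin (N + m) => Fin.append φ ψ c (0 + r)).submatrix
        finSumFinEquiv finSumFinEquiv =
        fromBlocks P B (of fun (t : Fin m) (j : Fin N) => φ j (N + t))
          (of fun t k : Fin m => ψ k (N + t)) := by
      ext (r | t) (j | k) <;> simp [P, B]
    rw [casoratian, ← det_submatrix_equiv_self finSumFinEquiv, hblocks, det_fromBlocks₁₁,
      invOf_eq_nonsing_inv, hP]
    congr 2
    ext t k
    simp [mul_apply, Matrix.mul_assoc, mul_comm]

theorem casoratian_mul_det_casoratian_snoc (φ : Fin N → ℕ → K) (ψ : Fin m → ℕ → K)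
    (hφ : casoratian φ 0 ≠ 0) :
    casoratian φ 0 * (of fun i k : Fin m => casoratian (Fin.snoc φ (ψ k)) i).det =
      (∏ i : Fin m, casoratian φ i) * casoratian (Fin.append φ ψ) 0 := by
  obtain ⟨c, hc, happend⟩ := exists_casoratian_append_eq_mul_det φ ψ hφ
  have hsnoc : (of fun i k : Fin m => casoratian (Fin.snoc φ (ψ k)) i) =
      of fun i k : Fin m => casoratian (Fin.snoc φ fun r => ψ k r - ∑ j, c k j * φ j r) i := by
    ext i k
    exact (casoratian_snoc_sub_sum φ (ψ k) (c k) i).symm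
  rw [hsnoc, det_casoratian_snoc_of_eq_zero φ _ hc, happend]
  ring

theorem casoratian_append_eq_zero_iff (φ : Fin N → ℕ → K) (ψ : Fin m → ℕ → K)
    (hφ : ∀ i ≤ m, casoratian φ i ≠ 0) :
    casoratian (Fin.append φ ψ) 0 = 0 ↔
      (of fun i k : Fin m => casoratian (Fin.snoc φ (ψ k)) i).det = 0 := by
  have h0 := hφ 0 m.zero_le
  have hprod : ∏ i : Fin m, casoratian φ i ≠ 0 :=
    prod_ne_zero_iff.mpr fun i _ => hφ i i.is_lt.le
  have h := casoratian_mul_det_casoratian_snoc φ ψ h0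
  constructor <;> intro hz <;> rw [hz, mul_zero] at h
  · exact (mul_eq_zero.mp h).resolve_left h0
  · exact (mul_eq_zero.mp h.symm).resolve_left hprod

end Sylvester

section QCalculus

variable {q : ℝ}

noncomputable def qDerivCoeff (q : ℝ) : ℕ → ℕ → ℝ → ℝ
  | 0, j, _ => if j = 0 then 1 else 0
  | i + 1, 0, x => -qDerivCoeff q i 0 x / (x * (q - 1))
  | i + 1, j + 1, x => (qDerivCoeff q i j (q * x) - qDerivCoeff q i (j + 1) x) / (x * (q - 1))

theorem qDerivCoeff_eq_zero_of_lt {i j : ℕ} (h : i < j) (x : ℝ) : qDerivCoeff q i j x = 0 := by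
  induction i generalizing j x with
  | zero => simp [qDerivCoeff, h.ne']
  | succ i ih =>
    obtain ⟨j, rfl⟩ := Nat.exists_eq_add_of_lt (Nat.zero_lt_of_lt h)
    simp [qDerivCoeff, ih (by omega : i < j), ih (by omega : i < j + 1)]

theorem qDerivCoeff_self_ne_zero (hq0 : q ≠ 0) (hq1 : q ≠ 1) (i : ℕ) {x : ℝ} (hx : x ≠ 0) :
    qDerivCoeff q i i x ≠ 0 := by
  induction i generalizing x with
  | zero => simp [qDerivCoeff]
  | succ i ih =>
    rw [qDerivCoeff, qDerivCoeff_eq_zero_of_lt (lt_add_one i), sub_zero]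
    exact div_ne_zero (ih (mul_ne_zero hq0 hx)) (mul_ne_zero hx (sub_ne_zero.mpr hq1))

theorem iterate_qDeriv_apply_eq_sum (hq0 : q ≠ 0) (i : ℕ) (f : ℝ → ℝ) {x : ℝ} (hx : x ≠ 0) :
    (qDeriv q)^[i] f x = ∑ j ∈ range (i + 1), qDerivCoeff q i j x * f (q ^ j * x) := by
  induction i generalizing x with
  | zero => simp [qDerivCoeff]
  | succ i ih =>
    rw [Function.iterate_succ_apply', qDeriv, ih (mul_ne_zero hq0 hx), ih hx,
      sum_range_succ' _ (i + 1)]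
    have hlast : qDerivCoeff q i (i + 1) x = 0 := qDerivCoeff_eq_zero_of_lt (lt_add_one i) x
    simp only [qDerivCoeff, sub_div, sub_mul, sum_sub_distrib]
    rw [sum_range_succ' (fun j => qDerivCoeff q i j x * f (q ^ j * x)),
      sum_range_succ (fun k => qDerivCoeff q i (k + 1) x / _ * _), hlast]
    simp only [div_mul_eq_mul_div, ← sum_div, pow_succ, mul_assoc, mul_comm q]
    ring

theorem prod_qDerivCoeff_self_ne_zero (hq0 : q ≠ 0) (hq1 : q ≠ 1) (n : ℕ) {x : ℝ} (hx : x ≠ 0) :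
    ∏ a : Fin n, qDerivCoeff q a a x ≠ 0 :=
  prod_ne_zero_iff.mpr fun a _ => qDerivCoeff_self_ne_zero hq0 hq1 a hx

def qSample (q x : ℝ) (f : ℝ → ℝ) (r : ℕ) : ℝ := f (q ^ r * x)

theorem qWronskian_pow_mul_eq_mul_casoratian (hq0 : q ≠ 0) {n : ℕ} (f : Fin n → ℝ → ℝ) {x : ℝ}
    (hx : x ≠ 0) (i : ℕ) :
    qWronskian q n f (q ^ i * x) =
      (∏ a : Fin n, qDerivCoeff q a a (q ^ i * x)) * casoratian (qSample q x ∘ f) i := by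
  have hy : q ^ i * x ≠ 0 := mul_ne_zero (pow_ne_zero i hq0) hx
  have hfactor : (of fun a j : Fin n => (qDeriv q)^[a] (f j) (q ^ i * x)) =
      (of fun a b : Fin n => qDerivCoeff q a b (q ^ i * x)) *
        of fun r j : Fin n => (qSample q x ∘ f) j (i + r) := by
    ext a j
    simp only [of_apply, iterate_qDeriv_apply_eq_sum hq0 _ _ hy, mul_apply]
    rw [Fin.sum_univ_eq_sum_range
      (fun b => qDerivCoeff q a b (q ^ i * x) * (qSample q x ∘ f) j (i + b))]
    refine sum_subset (fun b hb => by simp at hb ⊢; omega) (fun b _ hb => ?_) |>.trans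
      (sum_congr rfl fun b _ => ?_)
    · rw [qDerivCoeff_eq_zero_of_lt (by simpa using hb), zero_mul]
    · rw [Function.comp_apply, qSample, pow_add, mul_assoc, mul_left_comm]
  have hlower : (of fun a b : Fin n => qDerivCoeff q a b (q ^ i * x)).IsLowerTriangular :=
    fun a b hab => qDerivCoeff_eq_zero_of_lt hab _
  rw [qWronskian, hfactor, det_mul, det_of_isLowerTriangular _ hlower, casoratian]
  rfl

theorem casoratian_qSample_ne_zero (hq0 : q ≠ 0) {n : ℕ} {f : Fin n → ℝ → ℝ}
    (hW : ∀ x : ℝ, x ≠ 0 → qWronskian q n f x ≠ 0) {x : ℝ} (hx : x ≠ 0) (i : ℕ) :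
    casoratian (qSample q x ∘ f) i ≠ 0 :=
  right_ne_zero_of_mul (qWronskian_pow_mul_eq_mul_casoratian hq0 f hx i ▸
    hW _ (mul_ne_zero (pow_ne_zero i hq0) hx))

theorem qWronskian_eq_zero_iff (hq0 : q ≠ 0) (hq1 : q ≠ 1) {n : ℕ} (f : Fin n → ℝ → ℝ) {x : ℝ}
    (hx : x ≠ 0) : qWronskian q n f x = 0 ↔ casoratian (qSample q x ∘ f) 0 = 0 := by
  have h := qWronskian_pow_mul_eq_mul_casoratian hq0 f hx 0
  rw [pow_zero, one_mul] at h
  rw [h, mul_eq_zero, or_iff_right (prod_qDerivCoeff_self_ne_zero hq0 hq1 n hx)]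

theorem qWronskian_div_eq_zero_iff (hq0 : q ≠ 0) (hq1 : q ≠ 1) {N m : ℕ} (φ : Fin N → ℝ → ℝ)
    (ψ : Fin m → ℝ → ℝ) (hW : ∀ x : ℝ, x ≠ 0 → qWronskian q N φ x ≠ 0) {x : ℝ} (hx : x ≠ 0) :
    qWronskian q m (fun k y => qWronskian q (N + 1) (Fin.snoc φ (ψ k)) y / qWronskian q N φ y)
        x = 0 ↔
      (of fun i k : Fin m => casoratian (Fin.snoc (qSample q x ∘ φ) (qSample q x (ψ k))) i).det
        = 0 := by
  have hgrid : ∀ i : ℕ, q ^ i * x ≠ 0 := fun i => mul_ne_zero (pow_ne_zero i hq0) hx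
  set s : ℕ → ℕ → ℝ := fun n i => ∏ a : Fin n, qDerivCoeff q a a (q ^ i * x)
  have hratio : ∀ (i : ℕ) k, qWronskian q (N + 1) (Fin.snoc φ (ψ k)) (q ^ i * x) /
      qWronskian q N φ (q ^ i * x) = s (N + 1) i / (s N i * casoratian (qSample q x ∘ φ) i) *
        casoratian (Fin.snoc (qSample q x ∘ φ) (qSample q x (ψ k))) i := by
    intro i k
    rw [qWronskian_pow_mul_eq_mul_casoratian hq0 _ hx,
      qWronskian_pow_mul_eq_mul_casoratian hq0 _ hx, Fin.comp_snoc]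
    ring
  have hscale := det_mul_column
    (fun i : Fin m => s (N + 1) i / (s N i * casoratian (qSample q x ∘ φ) i))
    (of fun i k : Fin m => casoratian (Fin.snoc (qSample q x ∘ φ) (qSample q x (ψ k))) i)
  have hscale_ne : ∏ i : Fin m, s (N + 1) i / (s N i * casoratian (qSample q x ∘ φ) i) ≠ 0 :=
    prod_ne_zero_iff.mpr fun i _ =>
      div_ne_zero (prod_qDerivCoeff_self_ne_zero hq0 hq1 _ (hgrid i))
        (mul_ne_zero (prod_qDerivCoeff_self_ne_zero hq0 hq1 _ (hgrid i))
          (casoratian_qSample_ne_zero hq0 hW hx i))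
  simp only [of_apply] at hscale
  rw [qWronskian_eq_zero_iff hq0 hq1 _ hx, casoratian]
  simp only [Function.comp_apply, qSample, zero_add, hratio]
  rw [hscale, mul_eq_zero, or_iff_right hscale_ne]

end QCalculus

theorem qWronskian_constraint_iff_general (q : ℝ) (hq0 : q ≠ 0) (hq1 : q ≠ 1)
    (N M l : ℕ) (φ : Fin N → ℝ → ℝ)
    (hW : ∀ x : ℝ, x ≠ 0 → qWronskian q N φ x ≠ 0)
    (ι : Fin (M + 1) → Fin N) :
    (∀ x : ℝ, x ≠ 0 →
        qWronskian q (N + (M + 1))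
          (Fin.append φ (fun k : Fin (M + 1) => (qDeriv q)^[l] (φ (ι k)))) x = 0) ↔
    (∀ x : ℝ, x ≠ 0 →
        qWronskian q (M + 1)
          (fun k : Fin (M + 1) => fun y =>
            qWronskian q (N + 1) (Fin.snoc φ ((qDeriv q)^[l] (φ (ι k)))) y /
              qWronskian q N φ y) x = 0) := by
  refine forall₂_congr fun x hx => ?_
  rw [qWronskian_eq_zero_iff hq0 hq1 _ hx, Fin.comp_append,
    casoratian_append_eq_zero_iff _ _ fun i _ => casoratian_qSample_ne_zero hq0 hW hx i,
    qWronskian_div_eq_zero_iff hq0 hq1 φ _ hW hx]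
  rfl

/-- For fixed indices `i_1 < ⋯ < i_{M+1}` (given by a strictly monotone `ι`), the vanishing of
`W_{N+M+1}^q(φ_1,…,φ_N,∂_q^l φ_{i_1},…,∂_q^l φ_{i_{M+1}})` for all `x ≠ 0` is equivalent to
the vanishing of `W_{M+1}^q(ρ_{i_1},…,ρ_{i_{M+1}})` for all `x ≠ 0`, where
`ρ_i = W_{N+1}^q(φ_1,…,φ_N,∂_q^l φ_i)/W_N^q(φ_1,…,φ_N)`. -/
theorem qWronskian_constraint_iff (q : ℝ) (hq0 : q ≠ 0) (hq1 : q ≠ 1)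
    (N M l : ℕ) (hN : 1 ≤ N) (hl : 1 ≤ l) (φ : Fin N → ℝ → ℝ)
    (hW : ∀ x : ℝ, x ≠ 0 → qWronskian q N φ x ≠ 0)
    (ι : Fin (M + 1) → Fin N) (hι : StrictMono ι) :
    (∀ x : ℝ, x ≠ 0 →
        qWronskian q (N + (M + 1))
          (Fin.append φ (fun k : Fin (M + 1) => (qDeriv q)^[l] (φ (ι k)))) x = 0) ↔
    (∀ x : ℝ, x ≠ 0 →
        qWronskian q (M + 1)
          (fun k : Fin (M + 1) => fun y =>
            qWronskian q (N + 1) (Fin.snoc φ ((qDeriv q)^[l] (φ (ι k)))) y /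
              qWronskian q N φ y) x = 0) :=
  qWronskian_constraint_iff_general q hq0 hq1 N M l φ hW ι
end
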